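/- (Key inequality of the fair primal dual method, PD3O case.) Let E be a real inner product space, f₁ : E → ℝ convex and differentiable with L-Lipschitz continuous gradient (L > 0), h : E → ℝ and φ : E → ℝ convex, and σ, τ > 0. Given x₀, y₀ ∈ E, suppose x̂ minimizes x ↦ h(x) + (1/(2σ))‖x − (x₀ − σ(y₀ + ∇f₁(x₀)))‖², set x̄ := 2x̂ − x₀ + σ(∇f₁(x₀) − ∇f₁(x̂)), and suppose y' minimizes y ↦ φ(y) + (1/(2τ))‖y − (y₀ + τ x̄)‖². Define d̄((a,b), w; (a',b'), w') := (1/(2σ))‖a − a'‖² + (1/(2τ))‖b − b'‖² + (σ/2)‖w − w'‖² − ⟨b − b', (a − a') − σ(w − w')⟩ − ⟨a − a', w − w'⟩. Then for all x, y ∈ E: [f₁(x̂) + h(x̂) + φ(y')] − [f₁(x) + h(x) + φ(y)] − (⟨x − x̂, y'⟩ − ⟨y − y', x̂⟩) ≤ d̄((x,y), ∇f₁(x); (x₀,y₀), ∇f₁(x₀)) − d̄((x,y), ∇f₁(x); (x̂,y'), ∇f₁(x̂)) − d̄((x̂,y'), ∇f₁(x); (x₀,y₀), ∇f₁(x₀))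 − (1/(2L) − σ/2)‖∇f₁(x) − ∇f₁(x̂)‖². -/

import Mathlib

open RealInnerProductSpace

/-- The Bregman-type distance function `d̄` used in the PD3O case of the
fair primal dual method. -/
noncomputable def dbar {E : Type*} [NormedAddCommGroup E] [InnerProductSpace ℝ E]
    (σ τ : ℝ) (p : E × E) (w : E) (q : E × E) (w' : E) : ℝ :=
  1 / (2 * σ) * ‖p.1 - q.1‖ ^ 2 + 1 / (2 * τ) * ‖p.2 - q.2‖ ^ 2 + σ / 2 * ‖w - w'‖ ^ 2
    - ⟪p.2 - q.2, (p.1 - q.1) - σ • (w - w')⟫ - ⟪p.1 - q.1, w - w'⟫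

/-!
Each of the three steps of PD3O contributes one inequality: the two proximal steps give the
variational inequalities of their prox problems, and the gradient step gives the cocoercivity
inequality of `∇f₁`, which is where `1 / (2L)` comes from. Adding them up, the claim reduces to
an exact identity for the combination of the three `d̄` terms, in which the over-relaxed point
`x̄` is precisely what makes the cross terms between the primal and the dual step cancel.
-/

open Set Filter Topology AffineMap

section

variable {E : Type*} [NormedAddCommGroup E] [InnerProductSpace ℝ E]

/-- `p` is a proximal point `prox_{σF}(a)`. -/
def IsProxPoint (σ : ℝ) (F : E → ℝ) (a p : E) : Prop :=
  ∀ z, F p + 1 / (2 * σ) * ‖p - a‖ ^ 2 ≤ F z + 1 / (2 * σ) * ‖z - a‖ ^ 2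

theorem ConvexOn.sub_le_inner_of_isProxPoint {F : E → ℝ} {σ : ℝ} {a p : E}
    (hF : ConvexOn ℝ univ F) (hp : IsProxPoint σ F a p) (z : E) :
    F p - F z ≤ σ⁻¹ * ⟪z - p, p - a⟫ := by
  set C := (2 * σ)⁻¹ * ‖z - p‖ ^ 2
  -- Compare `p` with the points `(1 - t) p + t z` of the segment towards `z`, then let `t → 0⁺`.
  have key : ∀ t ∈ Ioc (0 : ℝ) 1, F p - F z ≤ σ⁻¹ * ⟪z - p, p - a⟫ + t * C := by
    rintro t ⟨ht0, ht1⟩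
    have hconv := hF.2 (mem_univ p) (mem_univ z) (sub_nonneg.2 ht1) ht0.le (sub_add_cancel 1 t)
    simp only [smul_eq_mul] at hconv
    have hmin := hp ((1 - t) • p + t • z)
    have hsq : ‖(1 - t) • p + t • z - a‖ ^ 2
        = ‖p - a‖ ^ 2 + 2 * t * ⟪z - p, p - a⟫ + t ^ 2 * ‖z - p‖ ^ 2 := by
      rw [show (1 - t) • p + t • z - a = (p - a) + t • (z - p) by module, norm_add_sq_real,
        real_inner_smul_right, norm_smul, Real.norm_eq_abs, abs_of_pos ht0, real_inner_comm]
      ring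
    rw [hsq] at hmin
    have hscaled : t * (F p - F z) ≤ t * (σ⁻¹ * ⟪z - p, p - a⟫ + t * C) := by
      have e : t * (σ⁻¹ * ⟪z - p, p - a⟫ + t * C)
          = 1 / (2 * σ) * (2 * t * ⟪z - p, p - a⟫) + 1 / (2 * σ) * (t ^ 2 * ‖z - p‖ ^ 2) := by
        simp only [C]; ring
      rw [e]; linarith
    exact le_of_mul_le_mul_left hscaled ht0
  have hlim : Tendsto (fun t : ℝ => σ⁻¹ * ⟪z - p, p - a⟫ + t * C) (𝓝[>] 0)
      (𝓝 (σ⁻¹ * ⟪z - p, p - a⟫)) :=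
    ((by fun_prop : Continuous fun t : ℝ => σ⁻¹ * ⟪z - p, p - a⟫ + t * C).tendsto' 0 _
      (by simp)).mono_left nhdsWithin_le_nhds
  exact ge_of_tendsto hlim (by filter_upwards [Ioc_mem_nhdsGT zero_lt_one] using key)

theorem dbar_sub_dbar_sub_dbar_eq {σ τ : ℝ} (hσ : σ ≠ 0) (hτ : τ ≠ 0)
    (x y x₀ y₀ x₁ y₁ g g₀ g₁ : E) :
    dbar σ τ (x, y) g (x₀, y₀) g₀ - dbar σ τ (x, y) g (x₁, y₁) g₁ - dbar σ τ (x₁, y₁) g (x₀, y₀) g₀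
      = σ⁻¹ * ⟪x - x₁, x₁ - (x₀ - σ • (y₀ + g₀))⟫
        + τ⁻¹ * ⟪y - y₁, y₁ - (y₀ + τ • (2 • x₁ - x₀ + σ • (g₀ - g₁)))⟫
        + ⟪g₁, x₁ - x⟫ - σ / 2 * ‖g - g₁‖ ^ 2 - ⟪x - x₁, y₁⟫ + ⟪y - y₁, x₁⟫ := by
  simp only [dbar, ← real_inner_self_eq_norm_sq, two_nsmul, inner_sub_left, inner_sub_right,
    inner_add_right, real_inner_smul_right]
  -- `real_inner_comm` is a permutation lemma, so `simp` uses it to sort the arguments.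
  simp only [real_inner_comm]
  field_simp
  ring

variable [CompleteSpace E]

theorem HasGradientAt.hasDerivAt_comp_lineMap {f : E → ℝ} {g u w : E} {t : ℝ}
    (hf : HasGradientAt f g (lineMap u w t)) :
    HasDerivAt (f ∘ lineMap u w) ⟪g, w - u⟫ t := by
  simpa using hf.hasFDerivAt.comp_hasDerivAt t hasDerivAt_lineMap

theorem ConvexOn.add_inner_le_of_hasGradientAt {f : E → ℝ} {g u : E}
    (hconv : ConvexOn ℝ univ f) (hf : HasGradientAt f g u) (w : E) :
    f u + ⟪g, w - u⟫ ≤ f w := by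
  have hf0 : HasGradientAt f g (lineMap u w (0 : ℝ)) := by rwa [lineMap_apply_zero]
  have hslope := (hconv.comp_affineMap (lineMap u w)).le_slope_of_hasDerivAt (mem_univ 0)
    (mem_univ 1) zero_lt_one hf0.hasDerivAt_comp_lineMap
  simp only [slope_def_field, Function.comp_apply, lineMap_apply_one, lineMap_apply_zero, sub_zero,
    div_one] at hslope
  linarith

theorem le_add_inner_add_sq_of_lipschitz_gradient {f : E → ℝ} {f' : E → E} {L : ℝ}
    (hf : ∀ z, HasGradientAt f (f' z) z) (hlip : ∀ a b, ‖f' a - f' b‖ ≤ L * ‖a - b‖) (z w : E) :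
    f w ≤ f z + ⟪f' z, w - z⟫ + L / 2 * ‖w - z‖ ^ 2 := by
  have hd : ∀ t : ℝ, HasDerivAt (f ∘ lineMap z w) ⟪f' (lineMap z w t), w - z⟫ t :=
    fun t => (hf _).hasDerivAt_comp_lineMap
  have hB : ∀ t, HasDerivAt (fun s : ℝ => f z + s * ⟪f' z, w - z⟫ + L / 2 * s ^ 2 * ‖w - z‖ ^ 2)
      (⟪f' z, w - z⟫ + L * t * ‖w - z‖ ^ 2) t := fun t =>
    ((((hasDerivAt_id' t).mul_const _).const_add (f z)).add
      (((hasDerivAt_pow 2 t).const_mul (L / 2)).mul_const _)).congr_deriv (by push_cast; ring)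
  have hbound : ∀ t ∈ Ico (0 : ℝ) 1,
      ⟪f' (lineMap z w t), w - z⟫ ≤ ⟪f' z, w - z⟫ + L * t * ‖w - z‖ ^ 2 := by
    rintro t ⟨ht0, -⟩
    have hlip' : ‖f' (lineMap z w t) - f' z‖ ≤ L * (t * ‖w - z‖) := by
      simpa [lineMap_apply_module', norm_smul, abs_of_nonneg ht0] using hlip (lineMap z w t) z
    calc ⟪f' (lineMap z w t), w - z⟫
        = ⟪f' z, w - z⟫ + ⟪f' (lineMap z w t) - f' z, w - z⟫ := by rw [inner_sub_left]; ring
      _ ≤ ⟪f' z, w - z⟫ + ‖f' (lineMap z w t) - f' z‖ * ‖w - z‖ := by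
          gcongr; exact real_inner_le_norm _ _
      _ ≤ ⟪f' z, w - z⟫ + L * (t * ‖w - z‖) * ‖w - z‖ := by gcongr
      _ = ⟪f' z, w - z⟫ + L * t * ‖w - z‖ ^ 2 := by ring
  have hend := image_le_of_deriv_right_le_deriv_boundary
    (fun t _ => (hd t).continuousAt.continuousWithinAt) (fun t _ => (hd t).hasDerivWithinAt)
    (by simp) (fun t _ => (hB t).continuousAt.continuousWithinAt)
    (fun t _ => (hB t).hasDerivWithinAt) hbound (right_mem_Icc.2 zero_le_one)
  simpa using hend

theorem ConvexOn.sub_le_inner_sub_sq_of_lipschitz_gradient {f : E → ℝ} {f' : E → E} {L : ℝ}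
    (hconv : ConvexOn ℝ univ f) (hL : 0 < L) (hf : ∀ z, HasGradientAt f (f' z) z)
    (hlip : ∀ a b, ‖f' a - f' b‖ ≤ L * ‖a - b‖) (u w : E) :
    f u - f w ≤ ⟪f' u, u - w⟫ - 1 / (2 * L) * ‖f' w - f' u‖ ^ 2 := by
  set d := f' w - f' u
  -- Convexity at `u` and the descent lemma at `w`, both evaluated at the gradient step from `w`.
  set w' := w - L⁻¹ • d
  have hconv' := hconv.add_inner_le_of_hasGradientAt (hf u) w'
  have hdesc := le_add_inner_add_sq_of_lipschitz_gradient hf hlip w w'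
  have e1 : ⟪f' u, w' - u⟫ = -⟪f' u, u - w⟫ - L⁻¹ * ⟪f' u, d⟫ := by
    simp only [w', inner_sub_right, real_inner_smul_right]; ring
  have e2 : ⟪f' w, w' - w⟫ = -L⁻¹ * ⟪f' w, d⟫ := by
    simp [w', real_inner_smul_right]
  have e3 : L / 2 * ‖w' - w‖ ^ 2 = 1 / (2 * L) * ‖d‖ ^ 2 := by
    simp only [w', sub_sub_cancel_left, norm_neg, norm_smul, norm_inv, Real.norm_eq_abs,
      abs_of_pos hL]
    field_simp
  have e4 : L⁻¹ * ⟪f' w, d⟫ - L⁻¹ * ⟪f' u, d⟫ = 2 * (1 / (2 * L)) * ‖d‖ ^ 2 := by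
    rw [← mul_sub, ← inner_sub_left, real_inner_self_eq_norm_sq]; ring
  rw [e1] at hconv'
  rw [e2, e3] at hdesc
  linarith

end

theorem stmt_10 {E : Type*} [NormedAddCommGroup E] [InnerProductSpace ℝ E] [CompleteSpace E]
    (f₁ h φ : E → ℝ) (f₁' : E → E) (L : ℝ) (hL : 0 < L)
    (hf₁conv : ConvexOn ℝ Set.univ f₁)
    (hf₁diff : ∀ x, HasGradientAt f₁ (f₁' x) x)
    (hf₁lip : ∀ x y, ‖f₁' x - f₁' y‖ ≤ L * ‖x - y‖)
    (hhconv : ConvexOn ℝ Set.univ h)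
    (hφconv : ConvexOn ℝ Set.univ φ)
    (σ τ : ℝ) (hσ : 0 < σ) (hτ : 0 < τ) (x₀ y₀ xhat xbar y' : E)
    (hxhat : ∀ x : E,
      h xhat + 1 / (2 * σ) * ‖xhat - (x₀ - σ • (y₀ + f₁' x₀))‖ ^ 2 ≤
      h x + 1 / (2 * σ) * ‖x - (x₀ - σ • (y₀ + f₁' x₀))‖ ^ 2)
    (hxbar : xbar = 2 • xhat - x₀ + σ • (f₁' x₀ - f₁' xhat))
    (hy' : ∀ y : E,
      φ y' + 1 / (2 * τ) * ‖y' - (y₀ + τ • xbar)‖ ^ 2 ≤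
      φ y + 1 / (2 * τ) * ‖y - (y₀ + τ • xbar)‖ ^ 2) :
    ∀ x y : E,
      (f₁ xhat + h xhat + φ y') - (f₁ x + h x + φ y) - (⟪x - xhat, y'⟫ - ⟪y - y', xhat⟫) ≤
        dbar σ τ (x, y) (f₁' x) (x₀, y₀) (f₁' x₀)
        - dbar σ τ (x, y) (f₁' x) (xhat, y') (f₁' xhat)
        - dbar σ τ (xhat, y') (f₁' x) (x₀, y₀) (f₁' x₀)
        - (1 / (2 * L) - σ / 2) * ‖f₁' x - f₁' xhat‖ ^ 2 := by
  intro x y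
  have hprimal := hhconv.sub_le_inner_of_isProxPoint hxhat x
  have hdual := hφconv.sub_le_inner_of_isProxPoint hy' y
  have hcocoercive :=
    hf₁conv.sub_le_inner_sub_sq_of_lipschitz_gradient hL hf₁diff hf₁lip xhat x
  subst hxbar
  rw [dbar_sub_dbar_sub_dbar_eq hσ.ne' hτ.ne']
  linarith
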